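/- arXiv:1906.00236 — 4 statements merged into one kernel-verified Lean document; each statement's English description precedes it below -/
import Mathlib

section
/- Let N ≥ 1 and m ≥ 1 be integers with N·m ≥ 2, let A_p be a d×d real matrix, and let B_0, B_1, …, B_{Nm−1} be d×d real matrices. Let M ≥ 0 and ε ≥ 0 be such that ‖A_p‖ ≤ M, ‖B_i‖ ≤ M and ‖A_p B_i − B_i A_p‖ ≤ ε for every i. Suppose there are indices Nm > j_1 > j_2 > ⋯ > j_m ≥ 0 such that B_{j_k} = A_p and j_k ≥ Nm − kN for each k ∈ {1, …, m}. Let L_1 denote the ordered product (in decreasing order of index) of the Nm − m factors B_i with i ∉ {j_1, …, j_m}. Then ‖B_{Nm−1} B_{Nm−2} ⋯ B_0 − A_p^m L_1‖ ≤ (N−1) · (m(m+1)/2) · M^{Nm−2} · ε. -/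
/-!
Move the factors `A_p` to the front. Commuting `A_p` past one neighbouring factor `B_i` changes
the product by a term of norm at most `ε M^(Nm-2)`, so the error is at most `ε M^(Nm-2)` times
the number of such adjacent transpositions. For the decreasingly ordered product this number is
the sum over `k` of the number of indices above `j_k` that are not among the `j`'s, which the
constraint `j_k ≥ Nm - kN` bounds by `kN - 1 - (k - 1) = k(N - 1)`.
-/

/-- The operator norm on `d × d` real matrices induced by the Euclidean norm on `ℝ^d`. -/
noncomputable def opNorm {d : ℕ} (A : Matrix (Fin d) (Fin d) ℝ) : ℝ :=
  ‖Matrix.toEuclideanCLM (𝕜 := ℝ) A‖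

open Finset
open scoped Matrix.Norms.L2Operator

theorem opNorm_eq_norm {d : ℕ} (A : Matrix (Fin d) (Fin d) ℝ) : opNorm A = ‖A‖ := rfl

namespace List

variable {α : Type*}

-- the number of adjacent transpositions needed to move every element satisfying `p` to the front
def frontInversions (p : α → Bool) : List α → ℕ
  | [] => 0
  | x :: t => (if p x then 0 else t.countP p) + frontInversions p t

theorem frontInversions_eq_zero_of_length_le_one {p : α → Bool} :
    ∀ {l : List α}, l.length ≤ 1 → l.frontInversions p = 0
  | [], _ => rfl
  | [_], _ => by simp [frontInversions]
  | _ :: _ :: _, h => by simp at h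

theorem mul_frontInversions_mul_pow_sub_two {M : ℝ} (p : α → Bool) (l : List α) :
    M * (l.frontInversions p * M ^ (l.length - 2)) = l.frontInversions p * M ^ (l.length - 1) := by
  rcases le_or_gt l.length 1 with hl | hl
  · simp [frontInversions_eq_zero_of_length_le_one hl]
  · rw [show l.length - 1 = l.length - 2 + 1 by omega, pow_succ]
    ring

theorem frontInversions_of_pairwise_gt [LinearOrder α] {p : α → Bool} :
    ∀ {l : List α}, l.Pairwise (· > ·) →
      l.frontInversions p = ((l.filter p).map fun y => l.countP fun x => !p x && y < x).sum
  | [], _ => rfl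
  | x :: t, hl => by
    rw [pairwise_cons] at hl
    have hcount : ∀ y ∈ t, ((x :: t).countP fun z => !p z && y < z)
        = (t.countP fun z => !p z && y < z) + if p x then 0 else 1 := by
      intro y hy
      cases hx : p x <;> simp [hx, hl.1 y hy]
    have hsum : (((t.filter p).map fun y => (x :: t).countP fun z => !p z && y < z).sum)
        = ((t.filter p).map fun y => t.countP fun z => !p z && y < z).sum
          + if p x then 0 else t.countP p := by
      rw [map_congr_left (fun y hy => hcount y (mem_of_mem_filter hy)), sum_map_add]
      cases p x <;> simp [countP_eq_length_filter]
    rw [frontInversions, frontInversions_of_pairwise_gt hl.2]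
    cases hx : p x
    · simp [hx, hsum, add_comm]
    · have hx0 : ((x :: t).countP fun z => !p z && x < z) = 0 := by
        simpa [countP_eq_zero] using fun z hz _ => (hl.1 z hz).le
      rw [filter_cons_of_pos hx, map_cons, sum_cons, hsum, hx0]
      simp [hx]

end List

section NormedRing

variable {R : Type*} [NormedRing R] {M ε : ℝ}

theorem List.norm_prod_le_pow_length (hM : 0 ≤ M) (h1 : ‖(1 : R)‖ ≤ 1) :
    ∀ {l : List R}, (∀ x ∈ l, ‖x‖ ≤ M) → ‖l.prod‖ ≤ M ^ l.length
  | [], _ => by simpa using h1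
  | x :: t, hl => by
    rw [List.forall_mem_cons] at hl
    rw [List.prod_cons, List.length_cons, pow_succ']
    exact (norm_mul_le _ _).trans
      (mul_le_mul hl.1 (norm_prod_le_pow_length hM h1 hl.2) (norm_nonneg _) hM)

theorem List.norm_prod_map_filter_not_le {ι : Type*} {p : ι → Bool} {f : ι → R} (hM : 0 ≤ M)
    (h1 : ‖(1 : R)‖ ≤ 1) {l : List ι} (hf : ∀ i ∈ l, ‖f i‖ ≤ M) :
    ‖((l.filter (fun i => !p i)).map f).prod‖ ≤ M ^ (l.length - l.countP p) := by
  refine (norm_prod_le_pow_length hM h1 ?_).trans_eq ?_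
  · simp only [mem_map, mem_filter]
    rintro _ ⟨i, ⟨hi, -⟩, rfl⟩
    exact hf i hi
  · rw [length_map, ← countP_eq_length_filter, length_eq_countP_add_countP p]
    simp

theorem norm_pow_le_pow_of_norm_le (hM : 0 ≤ M) (h1 : ‖(1 : R)‖ ≤ 1) {a : R} (ha : ‖a‖ ≤ M)
    (n : ℕ) : ‖a ^ n‖ ≤ M ^ n := by
  simpa using
    List.norm_prod_le_pow_length hM h1 (l := List.replicate n a) (by simpa using fun _ => ha)

theorem norm_mul_pow_sub_pow_mul_le (hM : 0 ≤ M) (h1 : ‖(1 : R)‖ ≤ 1) {a x : R} (ha : ‖a‖ ≤ M)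
    (hax : ‖a * x - x * a‖ ≤ ε) (n : ℕ) :
    ‖x * a ^ n - a ^ n * x‖ ≤ n * M ^ (n - 1) * ε := by
  induction n with
  | zero => simp
  | succ n ih =>
    have hε : 0 ≤ ε := (norm_nonneg _).trans hax
    have hsplit : x * a ^ (n + 1) - a ^ (n + 1) * x
        = (x * a ^ n - a ^ n * x) * a + a ^ n * (x * a - a * x) := by
      rw [pow_succ]; noncomm_ring
    calc ‖x * a ^ (n + 1) - a ^ (n + 1) * x‖
        ≤ ‖x * a ^ n - a ^ n * x‖ * ‖a‖ + ‖a ^ n‖ * ‖x * a - a * x‖ := by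
          rw [hsplit]
          exact (norm_add_le _ _).trans (add_le_add (norm_mul_le _ _) (norm_mul_le _ _))
      _ ≤ n * M ^ (n - 1) * ε * M + M ^ n * ε := by
          rw [norm_sub_rev (x * a)]
          gcongr
          exact norm_pow_le_pow_of_norm_le hM h1 ha n
      _ = (n + 1 : ℕ) * M ^ (n + 1 - 1) * ε := by
          rcases n with _ | n
          · simp
          · simp only [Nat.add_sub_cancel]
            push_cast
            ring

theorem norm_mul_pow_sub_pow_mul_mul_le (hM : 0 ≤ M) (h1 : ‖(1 : R)‖ ≤ 1) {a x y : R}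
    (ha : ‖a‖ ≤ M) (hax : ‖a * x - x * a‖ ≤ ε) {c n : ℕ} (hcn : c ≤ n) (hy : ‖y‖ ≤ M ^ (n - c)) :
    ‖(x * a ^ c - a ^ c * x) * y‖ ≤ c * M ^ (n - 1) * ε := by
  rcases Nat.eq_zero_or_pos c with rfl | hc
  · simp
  have hε : 0 ≤ ε := (norm_nonneg _).trans hax
  calc ‖(x * a ^ c - a ^ c * x) * y‖ ≤ c * M ^ (c - 1) * ε * M ^ (n - c) :=
        (norm_mul_le _ _).trans (mul_le_mul (norm_mul_pow_sub_pow_mul_le hM h1 ha hax c) hy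
          (norm_nonneg _) (by positivity))
    _ = c * M ^ (n - 1) * ε := by
        rw [show n - 1 = (c - 1) + (n - c) by omega, pow_add]
        ring

theorem norm_prod_sub_pow_mul_prod_filter_le {ι : Type*} {p : ι → Bool} {f : ι → R} {a : R}
    (hM : 0 ≤ M) (h1 : ‖(1 : R)‖ ≤ 1) (ha : ‖a‖ ≤ M) :
    ∀ {l : List ι}, (∀ i ∈ l, p i → f i = a) → (∀ i ∈ l, ‖f i‖ ≤ M) →
      (∀ i ∈ l, ‖a * f i - f i * a‖ ≤ ε) →
      ‖(l.map f).prod - a ^ l.countP p * ((l.filter (fun i => !p i)).map f).prod‖ ≤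
        l.frontInversions p * M ^ (l.length - 2) * ε
  | [], _, _, _ => by simp [List.frontInversions]
  | x :: t, hpa, hf, hcomm => by
    rw [List.forall_mem_cons] at hpa hf hcomm
    have ih := norm_prod_sub_pow_mul_prod_filter_le hM h1 ha hpa.2 hf.2 hcomm.2
    set T := (t.map f).prod
    set L := ((t.filter (fun i => !p i)).map f).prod
    have hI : M * (t.frontInversions p * M ^ (t.length - 2) * ε)
        = t.frontInversions p * M ^ (t.length - 1) * ε := by
      rw [← mul_assoc, List.mul_frontInversions_mul_pow_sub_two]
    have hlen : (x :: t).length - 2 = t.length - 1 := by simp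
    rw [hlen]
    cases hx : p x
    · have hsplit : (f x * T) - a ^ t.countP p * (f x * L)
          = f x * (T - a ^ t.countP p * L) + (f x * a ^ t.countP p - a ^ t.countP p * f x) * L := by
        noncomm_ring
      have hL : ‖L‖ ≤ M ^ (t.length - t.countP p) :=
        List.norm_prod_map_filter_not_le hM h1 hf.2
      simp only [List.map_cons, List.prod_cons, List.countP_cons, hx, List.filter_cons,
        List.frontInversions, Bool.false_eq_true, Bool.not_false, if_true, if_false, add_zero]
      calc ‖f x * T - a ^ t.countP p * (f x * L)‖
          ≤ ‖f x‖ * ‖T - a ^ t.countP p * L‖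
            + ‖(f x * a ^ t.countP p - a ^ t.countP p * f x) * L‖ := by
            rw [hsplit]
            exact (norm_add_le _ _).trans (add_le_add_left (norm_mul_le _ _) _)
        _ ≤ M * (t.frontInversions p * M ^ (t.length - 2) * ε)
            + t.countP p * M ^ (t.length - 1) * ε :=
            add_le_add (mul_le_mul hf.1 ih (norm_nonneg _) hM)
              (norm_mul_pow_sub_pow_mul_mul_le hM h1 ha hcomm.1 List.countP_le_length hL)
        _ = _ := by rw [hI]; push_cast; ring
    · simp only [List.map_cons, List.prod_cons, List.countP_cons, hx, List.filter_cons,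
        List.frontInversions, hpa.1 hx, if_true, Bool.not_true, Bool.false_eq_true, if_false,
        zero_add, pow_succ']
      calc ‖a * T - a * a ^ t.countP p * L‖ = ‖a * (T - a ^ t.countP p * L)‖ := by
            rw [mul_sub, mul_assoc]
        _ ≤ M * (t.frontInversions p * M ^ (t.length - 2) * ε) :=
            (norm_mul_le _ _).trans (mul_le_mul ha ih (norm_nonneg _) hM)
        _ = _ := hI

theorem List.countP_finRange_reverse {n : ℕ} (q : Fin n → Bool) :
    (List.finRange n).reverse.countP q = #{x | q x} := by
  rw [List.countP_reverse, Finset.card_def, Finset.filter_val, ← Multiset.countP_eq_card_filter,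
    Fin.univ_def]
  simp

theorem List.frontInversions_finRange_reverse {n : ℕ} (p : Fin n → Bool) :
    (List.finRange n).reverse.frontInversions p = ∑ y with p y, #{x | p x = false ∧ y < x} := by
  have hsorted : (List.finRange n).reverse.Pairwise (· > ·) :=
    List.pairwise_reverse.mpr (List.pairwise_lt_finRange n)
  rw [frontInversions_of_pairwise_gt hsorted,
    ← List.sum_toFinset _ ((List.nodup_reverse.mpr (List.nodup_finRange n)).filter p),
    List.toFinset_filter, List.toFinset_reverse, List.toFinset_finRange]
  refine sum_congr rfl fun y _ => ?_
  rw [List.countP_finRange_reverse]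
  simp

theorem StrictAnti.card_filter_notMem_image_and_lt {m n : ℕ} {j : Fin m → Fin n}
    (hj : StrictAnti j) (k : Fin m) :
    #{x | x ∉ univ.image j ∧ j k < x} = n - 1 - j k - k := by
  have hsplit := card_filter_add_card_filter_not (s := Ioi (j k)) (· ∈ univ.image j)
  have hmem : (Ioi (j k)).filter (· ∈ univ.image j) = (Iio k).image j := by
    ext x
    simp only [mem_filter, mem_Ioi, mem_image, mem_univ, true_and, mem_Iio]
    constructor
    · rintro ⟨hx, i, rfl⟩
      exact ⟨i, hj.lt_iff_gt.mp hx, rfl⟩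
    · rintro ⟨i, hi, rfl⟩
      exact ⟨hj hi, i, rfl⟩
  have hnot : (Ioi (j k)).filter (· ∉ univ.image j)
      = univ.filter (fun x => x ∉ univ.image j ∧ j k < x) := by
    ext x
    simp [and_comm]
  rw [hmem, hnot, card_image_of_injective _ hj.injective, Fin.card_Iio, Fin.card_Ioi] at hsplit
  omega

theorem StrictAnti.frontInversions_finRange_reverse_le {N m : ℕ} {j : Fin m → Fin (N * m)}
    (hj : StrictAnti j) (hjge : ∀ k : Fin m, N * m - (k.val + 1) * N ≤ (j k).val) :
    (List.finRange (N * m)).reverse.frontInversions (· ∈ univ.image j)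
      ≤ ∑ k ∈ range m, (k + 1) * (N - 1) := by
  rw [List.frontInversions_finRange_reverse]
  simp only [decide_eq_true_eq, decide_eq_false_iff_not, filter_mem_eq_inter, univ_inter]
  rw [sum_image fun _ _ _ _ h => hj.injective h, ← Fin.sum_univ_eq_sum_range]
  refine sum_le_sum fun k _ => ?_
  have hk := hjge k
  have hlt := (j k).isLt
  have hmul := Nat.mul_sub_one (k.val + 1) N
  rw [hj.card_filter_notMem_image_and_lt]
  omega

theorem Nat.cast_sum_range_succ_mul_sub_one {N : ℕ} (hN : 1 ≤ N) (m : ℕ) :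
    ((∑ k ∈ range m, (k + 1) * (N - 1) : ℕ) : ℝ) = ((N : ℝ) - 1) * (m * (m + 1) / 2) := by
  induction m with
  | zero => simp
  | succ m ih =>
    rw [sum_range_succ, Nat.cast_add, ih]
    push_cast [Nat.cast_sub hN]
    ring

theorem rearrangement_error_bound_general {d N m : ℕ} (hN : 1 ≤ N)
    (Ap : Matrix (Fin d) (Fin d) ℝ) (B : Fin (N * m) → Matrix (Fin d) (Fin d) ℝ)
    (M ε : ℝ) (hM : 0 ≤ M) (hε : 0 ≤ ε)
    (hAp : opNorm Ap ≤ M)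
    (hB : ∀ i, opNorm (B i) ≤ M)
    (hcomm : ∀ i, opNorm (Ap * B i - B i * Ap) ≤ ε)
    (j : Fin m → Fin (N * m)) (hj : StrictAnti j)
    (hjB : ∀ k, B (j k) = Ap)
    (hjge : ∀ k : Fin m, N * m - (k.val + 1) * N ≤ (j k).val) :
    opNorm ((((List.finRange (N * m)).reverse.map B).prod) -
        Ap ^ m *
          ((((List.finRange (N * m)).reverse.filter
              (fun i => i ∉ Finset.image j Finset.univ)).map B).prod)) ≤
      ((N : ℝ) - 1) * ((m : ℝ) * ((m : ℝ) + 1) / 2) * M ^ (N * m - 2) * ε := by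
  simp only [opNorm_eq_norm] at hAp hB hcomm ⊢
  set S := univ.image j
  have hSB : ∀ i ∈ S, B i = Ap := by
    simp only [S, mem_image]
    rintro _ ⟨k, -, rfl⟩
    exact hjB k
  have h1 : ‖(1 : Matrix (Fin d) (Fin d) ℝ)‖ ≤ 1 := by
    rw [Matrix.cstar_norm_def, map_one]
    exact ContinuousLinearMap.norm_id_le
  have hcount : (List.finRange (N * m)).reverse.countP (· ∈ S) = m := by
    rw [List.countP_finRange_reverse]
    simp [S, card_image_of_injective _ hj.injective]
  have hpull := norm_prod_sub_pow_mul_prod_filter_le (p := (· ∈ S)) hM h1 hAp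
    (l := (List.finRange (N * m)).reverse) (fun i _ hi => hSB i (of_decide_eq_true hi))
    (fun i _ => hB i) (fun i _ => hcomm i)
  rw [hcount, List.length_reverse, List.length_finRange] at hpull
  calc _ ≤ _ * M ^ (N * m - 2) * ε := by simpa using hpull
    _ ≤ _ := by
      rw [← Nat.cast_sum_range_succ_mul_sub_one hN]
      gcongr
      exact hj.frontInversions_finRange_reverse_le hjge

theorem rearrangement_error_bound {d N m : ℕ} (hN : 1 ≤ N) (hm : 1 ≤ m)
    (hNm : 2 ≤ N * m)
    (Ap : Matrix (Fin d) (Fin d) ℝ) (B : Fin (N * m) → Matrix (Fin d) (Fin d) ℝ)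
    (M ε : ℝ) (hM : 0 ≤ M) (hε : 0 ≤ ε)
    (hAp : opNorm Ap ≤ M)
    (hB : ∀ i, opNorm (B i) ≤ M)
    (hcomm : ∀ i, opNorm (Ap * B i - B i * Ap) ≤ ε)
    (j : Fin m → Fin (N * m)) (hj : StrictAnti j)
    (hjB : ∀ k, B (j k) = Ap)
    (hjge : ∀ k : Fin m, N * m - (k.val + 1) * N ≤ (j k).val) :
    opNorm ((((List.finRange (N * m)).reverse.map B).prod) -
        Ap ^ m *
          ((((List.finRange (N * m)).reverse.filter
              (fun i => i ∉ Finset.image j Finset.univ)).map B).prod)) ≤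
      ((N : ℝ) - 1) * ((m : ℝ) * ((m : ℝ) + 1) / 2) * M ^ (N * m - 2) * ε :=
  rearrangement_error_bound_general hN Ap B M ε hM hε hAp hB hcomm j hj hjB hjge
end NormedRing
end

section
/- Let P = {1, …, N} with N ≥ 1, let A_i (i ∈ P) be d×d real matrices, and let m ≥ 1 with N·m ≥ 2. Let M ≥ 0, ρ ≥ 0, ε ≥ 0 and suppose there is p ∈ P such that: ‖A_i‖ ≤ M for all i ∈ P; ‖A_p^m‖ ≤ ρ; ‖A_p A_i − A_i A_p‖ ≤ ε for all i ∈ P with i ≠ p; and there exists γ > 0 with ρ · M^{(N−1)m} + (N−1) · (m(m+1)/2) · M^{Nm−2} · ε ≤ e^{−γNm}. Let σ : ℕ → P be a switching signal such that for every s ∈ ℕ there exists t with s ≤ t < s + N and σ(t) = p (the subsystem p is activated at least once in every N consecutive time steps). Then there exists c > 0 such that ‖A_{σ(t−1)} ⋯ A_{σ(1)} A_{σ(0)}‖ ≤ c e^{−γt} for all t ≥ 1; consequently every trajectory x(t+1) = A_{σ(t)} x(t) satisfies ‖x(t)‖ ≤ c e^{−γt} ‖x(0)‖, i.e., the switched system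 is globally exponentially stable under σ. -/
/-- The state-transition matrix `Φ t = A (σ (t-1)) * ⋯ * A (σ 1) * A (σ 0)` of a
discrete-time switched linear system. -/
noncomputable def transitionMatrix {d : ℕ} {P : Type*} (A : P → Matrix (Fin d) (Fin d) ℝ)
    (σ : ℕ → P) (t : ℕ) : Matrix (Fin d) (Fin d) ℝ :=
  ((List.range t).reverse.map (fun i => A (σ i))).prod

/-! In every window of `N` consecutive steps the factor `A p` occurs, so the window is `U * A p * V`
with `U * V` a product of `N - 1` factors. Since every factor commutes with `A p` up to `ε`,
moving `A p` to the front costs at most `(N - 1) ε M ^ (N - 2)`. Doing this in `m` consecutive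
windows and pulling the `m` copies of `A p` through the remaining products gives
`‖Φ - A p ^ m * R‖ ≤ (N - 1) (m (m + 1) / 2) ε M ^ (N m - 2)` with `‖R‖ ≤ M ^ ((N - 1) m)`, so each
block of `N m` steps contracts by `e ^ (-γ N m)`; the fewer than `N m` leftover steps only cost
a constant. -/

section Monoid

variable {R : Type*} [Monoid R]

def transitionProd (f : ℕ → R) (s : ℕ) : ℕ → R
  | 0 => 1
  | n + 1 => f (s + n) * transitionProd f s n

@[simp]
lemma transitionProd_zero (f : ℕ → R) (s : ℕ) : transitionProd f s 0 = 1 := rfl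

lemma transitionProd_succ (f : ℕ → R) (s n : ℕ) :
    transitionProd f s (n + 1) = f (s + n) * transitionProd f s n := rfl

lemma transitionProd_add (f : ℕ → R) (s n k : ℕ) :
    transitionProd f s (n + k) = transitionProd f (s + n) k * transitionProd f s n := by
  induction k with
  | zero => simp
  | succ k ih =>
    rw [← add_assoc, transitionProd_succ, ih, transitionProd_succ, add_assoc, mul_assoc]

lemma transitionProd_mul (f : ℕ → R) (s L k : ℕ) :
    transitionProd f s (k * L) = transitionProd (fun j ↦ transitionProd f (s + j * L) L) 0 k := by
  induction k with
  | zero => simp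
  | succ k ih => rw [Nat.succ_mul, transitionProd_add, ih, transitionProd_succ, zero_add]

lemma transitionProd_eq_mul_mul (f : ℕ → R) {s t n : ℕ} (hst : s ≤ t) (hts : t ≤ s + n) :
    transitionProd f s (n + 1) =
      transitionProd f (t + 1) (s + n - t) * f t * transitionProd f s (t - s) := by
  obtain ⟨a, rfl⟩ := Nat.exists_eq_add_of_le hst
  obtain ⟨b, rfl⟩ := Nat.exists_eq_add_of_le (Nat.le_of_add_le_add_left hts)
  rw [show a + b + 1 = a + 1 + b by omega, transitionProd_add, transitionProd_succ]
  simp only [Nat.add_sub_cancel_left, ← add_assoc, mul_assoc]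

lemma map_transitionProd {S F : Type*} [Monoid S] [FunLike F R S] [MonoidHomClass F R S]
    (g : F) (f : ℕ → R) (s n : ℕ) : g (transitionProd f s n) = transitionProd (g ∘ f) s n := by
  induction n with
  | zero => simp
  | succ n ih => rw [transitionProd_succ, map_mul, ih, transitionProd_succ, Function.comp_apply]

end Monoid

lemma transitionMatrix_eq_transitionProd {d : ℕ} {P : Type*} (A : P → Matrix (Fin d) (Fin d) ℝ)
    (σ : ℕ → P) (t : ℕ) : transitionMatrix A σ t = transitionProd (A ∘ σ) 0 t := by
  induction t with
  | zero => rfl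
  | succ t ih =>
    rw [transitionProd_succ, ← ih, transitionMatrix, transitionMatrix, List.range_succ]
    simp

/-- The product rule for `(M ^ n * M ^ k)'`, which survives the truncated exponents. -/
lemma nat_mul_pow_pred_mul_pow_add (M : ℝ) (n k : ℕ) :
    n * M ^ (n - 1) * M ^ k + M ^ n * (k * M ^ (k - 1)) = (n + k : ℕ) * M ^ (n + k - 1) := by
  rcases n with _ | n <;> rcases k with _ | k
  · simp
  · simp
  · simp
  · rw [show n + 1 + (k + 1) - 1 = n + k + 1 by omega, Nat.add_sub_cancel, Nat.add_sub_cancel]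
    push_cast
    ring

section NormedRing

variable {R : Type*} [NormedRing R]

lemma norm_transitionProd_le (h1 : ‖(1 : R)‖ ≤ 1) {f : ℕ → R} {M : ℝ} (hf : ∀ i, ‖f i‖ ≤ M)
    (s n : ℕ) : ‖transitionProd f s n‖ ≤ M ^ n := by
  induction n with
  | zero => simpa using h1
  | succ n ih => rw [transitionProd_succ, pow_succ']; exact norm_mul_le_of_le (hf _) ih

/-- The bounds satisfied by a product of `n` factors of norm at most `M` that each commute with
`P` up to `ε`; by the Leibniz rule for commutators they are stable under products. -/
structure NearlyCommutesWith (P : R) (M ε : ℝ) (n : ℕ) (x : R) : Prop where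
  norm_le : ‖x‖ ≤ M ^ n
  norm_commutator_le : ‖P * x - x * P‖ ≤ n * ε * M ^ (n - 1)

namespace NearlyCommutesWith

variable {P x y : R} {M ε : ℝ} {n k : ℕ}

lemma one (h1 : ‖(1 : R)‖ ≤ 1) : NearlyCommutesWith P M ε 0 1 :=
  ⟨by simpa using h1, by simp⟩

lemma of_norm_le (hx : ‖x‖ ≤ M) (hPx : ‖P * x - x * P‖ ≤ ε) : NearlyCommutesWith P M ε 1 x :=
  ⟨by simpa using hx, by simpa using hPx⟩

lemma mul (hx : NearlyCommutesWith P M ε n x) (hy : NearlyCommutesWith P M ε k y) :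
    NearlyCommutesWith P M ε (n + k) (x * y) where
  norm_le := by rw [pow_add]; exact norm_mul_le_of_le hx.norm_le hy.norm_le
  norm_commutator_le := by
    have hxy : P * (x * y) - x * y * P = (P * x - x * P) * y + x * (P * y - y * P) := by
      noncomm_ring
    calc ‖P * (x * y) - x * y * P‖
        ≤ n * ε * M ^ (n - 1) * M ^ k + M ^ n * (k * ε * M ^ (k - 1)) := by
          rw [hxy]
          exact (norm_add_le _ _).trans <| add_le_add
            (norm_mul_le_of_le hx.norm_commutator_le hy.norm_le)
            (norm_mul_le_of_le hx.norm_le hy.norm_commutator_le)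
      _ = (n + k : ℕ) * ε * M ^ (n + k - 1) := by
          linear_combination ε * nat_mul_pow_pred_mul_pow_add M n k

lemma pow (h1 : ‖(1 : R)‖ ≤ 1) (hx : NearlyCommutesWith P M ε 1 x) (k : ℕ) :
    NearlyCommutesWith P M ε k (x ^ k) := by
  induction k with
  | zero => simpa using one h1
  | succ k ih => rw [pow_succ]; exact ih.mul hx

lemma transitionProd (h1 : ‖(1 : R)‖ ≤ 1) {f : ℕ → R}
    (hf : ∀ i, NearlyCommutesWith P M ε 1 (f i)) (s n : ℕ) :
    NearlyCommutesWith P M ε n (transitionProd f s n) := by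
  induction n with
  | zero => exact one h1
  | succ n ih => rw [transitionProd_succ, add_comm]; exact (hf _).mul ih

end NearlyCommutesWith

lemma exists_nearlyCommutesWith_norm_transitionProd_sub_le (h1 : ‖(1 : R)‖ ≤ 1)
    {P : R} {f : ℕ → R} {M ε : ℝ} (hM : 0 ≤ M) (hε : 0 ≤ ε)
    (hf : ∀ i, NearlyCommutesWith P M ε 1 (f i)) {s t n : ℕ} (hst : s ≤ t) (hts : t ≤ s + n)
    (hft : f t = P) :
    ∃ C, NearlyCommutesWith P M ε n C ∧
      ‖transitionProd f s (n + 1) - P * C‖ ≤ n * ε * M ^ (n - 1) := by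
  set u := transitionProd f (t + 1) (s + n - t)
  set v := transitionProd f s (t - s)
  have hu := NearlyCommutesWith.transitionProd h1 hf (t + 1) (s + n - t)
  have hv := NearlyCommutesWith.transitionProd h1 hf s (t - s)
  have hlen : s + n - t + (t - s) = n := by omega
  refine ⟨u * v, hlen ▸ hu.mul hv, ?_⟩
  have huPv : u * P * v - P * (u * v) = -((P * u - u * P) * v) := by noncomm_ring
  have hrest : 0 ≤ M ^ (s + n - t) * ((t - s : ℕ) * ε * M ^ (t - s - 1)) := by positivity
  calc ‖transitionProd f s (n + 1) - P * (u * v)‖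
      ≤ (s + n - t : ℕ) * ε * M ^ (s + n - t - 1) * M ^ (t - s) := by
        rw [transitionProd_eq_mul_mul f hst hts, hft, huPv, norm_neg]
        exact norm_mul_le_of_le hu.norm_commutator_le hv.norm_le
    _ ≤ n * ε * M ^ (n - 1) := by
        have := nat_mul_pow_pred_mul_pow_add M (s + n - t) (t - s)
        rw [hlen] at this
        linear_combination ε * this + hrest

lemma norm_transitionProd_sub_pow_mul_le (h1 : ‖(1 : R)‖ ≤ 1) {P : R} {B C : ℕ → R}
    {M a δ : ℝ} (hP : ‖P‖ ≤ M) (hB : ∀ j, ‖B j‖ ≤ M * a) (hC : ∀ j, ‖C j‖ ≤ a)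
    (hBC : ∀ j, ‖B j - P * C j‖ ≤ δ) (hCP : ∀ j, ‖C j * P - P * C j‖ ≤ δ) (s k : ℕ) :
    ‖transitionProd B s k - P ^ k * transitionProd C s k‖ ≤
      k * (k + 1) / 2 * δ * (M * a) ^ (k - 1) := by
  induction k with
  | zero => simp
  | succ k ih =>
    set X := transitionProd B s k
    set Y := transitionProd C s k
    have hX : ‖X‖ ≤ (M * a) ^ k := norm_transitionProd_le h1 hB s k
    have hY : ‖Y‖ ≤ a ^ k := norm_transitionProd_le h1 hC s k
    have hCPk : ‖C (s + k) * P ^ k - P ^ k * C (s + k)‖ ≤ k * δ * M ^ (k - 1) :=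
      ((NearlyCommutesWith.of_norm_le hP (hCP (s + k))).pow h1 k).norm_commutator_le
    have hsplit : B (s + k) * X - P ^ (k + 1) * (C (s + k) * Y) =
        (B (s + k) - P * C (s + k)) * X + P * C (s + k) * (X - P ^ k * Y) +
          P * ((C (s + k) * P ^ k - P ^ k * C (s + k)) * Y) := by
      rw [pow_succ']; noncomm_ring
    calc ‖transitionProd B s (k + 1) - P ^ (k + 1) * transitionProd C s (k + 1)‖
        ≤ δ * (M * a) ^ k + M * a * (k * (k + 1) / 2 * δ * (M * a) ^ (k - 1)) +
            M * (k * δ * M ^ (k - 1) * a ^ k) := by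
          rw [transitionProd_succ, transitionProd_succ, hsplit]
          refine norm_add₃_le.trans (add_le_add (add_le_add ?_ ?_) ?_)
          · exact norm_mul_le_of_le (hBC _) hX
          · exact norm_mul_le_of_le (norm_mul_le_of_le hP (hC _)) ih
          · exact norm_mul_le_of_le hP (norm_mul_le_of_le hCPk hY)
      _ = (k + 1 : ℕ) * ((k + 1 : ℕ) + 1) / 2 * δ * (M * a) ^ (k + 1 - 1) := by
          rcases k with _ | k
          · simp
          · simp only [Nat.add_sub_cancel, mul_pow, pow_succ]
            push_cast
            ring

lemma norm_transitionProd_le_of_frequent (h1 : ‖(1 : R)‖ ≤ 1) {P : R} {f : ℕ → R}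
    {M ε : ℝ} (hM : 0 ≤ M) (hε : 0 ≤ ε) (hf : ∀ i, NearlyCommutesWith P M ε 1 (f i)) {n : ℕ}
    (hfreq : ∀ s, ∃ t, s ≤ t ∧ t < s + (n + 1) ∧ f t = P) (s m : ℕ) :
    ‖transitionProd f s ((n + 1) * m)‖ ≤
      ‖P ^ m‖ * M ^ (n * m) + n * (m * (m + 1) / 2) * M ^ ((n + 1) * m - 2) * ε := by
  have hwindow (j : ℕ) : ∃ C, NearlyCommutesWith P M ε n C ∧
      ‖transitionProd f (s + j * (n + 1)) (n + 1) - P * C‖ ≤ n * ε * M ^ (n - 1) := by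
    obtain ⟨t, hst, hts, hft⟩ := hfreq (s + j * (n + 1))
    exact exists_nearlyCommutesWith_norm_transitionProd_sub_le h1 hM hε hf hst (by omega) hft
  choose C hC hBC using hwindow
  have hP : ‖P‖ ≤ M := by
    obtain ⟨t, -, -, hft⟩ := hfreq 0
    simpa [hft] using (hf t).norm_le
  have hB (j : ℕ) : ‖transitionProd f (s + j * (n + 1)) (n + 1)‖ ≤ M * M ^ n := by
    rw [← pow_succ']; exact norm_transitionProd_le h1 (fun i ↦ by simpa using (hf i).norm_le) _ _
  have hCP (j : ℕ) : ‖C j * P - P * C j‖ ≤ n * ε * M ^ (n - 1) := by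
    rw [norm_sub_rev]; exact (hC j).norm_commutator_le
  have hY : ‖transitionProd C 0 m‖ ≤ (M ^ n) ^ m :=
    norm_transitionProd_le h1 (fun j ↦ (hC j).norm_le) 0 m
  conv_lhs => rw [mul_comm, transitionProd_mul]
  calc _ ≤ ‖P ^ m * transitionProd C 0 m‖ +
        ‖transitionProd (fun j ↦ transitionProd f (s + j * (n + 1)) (n + 1)) 0 m -
          P ^ m * transitionProd C 0 m‖ := norm_le_insert' _ _
    _ ≤ ‖P ^ m‖ * (M ^ n) ^ m + m * (m + 1) / 2 * (n * ε * M ^ (n - 1)) * (M * M ^ n) ^ (m - 1) :=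
        add_le_add (norm_mul_le_of_le le_rfl hY)
          (norm_transitionProd_sub_pow_mul_le h1 hP hB (fun j ↦ (hC j).norm_le) hBC hCP 0 m)
    _ = ‖P ^ m‖ * M ^ (n * m) + n * (m * (m + 1) / 2) * M ^ ((n + 1) * m - 2) * ε := by
        rw [← pow_mul]
        rcases n with _ | n
        · simp
        rcases m with _ | m
        · simp
        rw [show (n + 1 + 1) * (m + 1) - 2 = n + (n + 2) * m by ring_nf; omega, ← pow_succ',
          pow_add, pow_mul, Nat.add_sub_cancel, Nat.add_sub_cancel]
        push_cast
        ring

lemma norm_transitionProd_le_mul_exp (h1 : ‖(1 : R)‖ ≤ 1) {f : ℕ → R} {M γ : ℝ} {L : ℕ}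
    (hL : 0 < L) (hM : 0 ≤ M) (hγ : 0 ≤ γ) (hf : ∀ i, ‖f i‖ ≤ M)
    (hwin : ∀ s, ‖transitionProd f s L‖ ≤ Real.exp (-γ * L)) (t : ℕ) :
    ‖transitionProd f 0 t‖ ≤ max 1 M ^ L * Real.exp (γ * L) * Real.exp (-γ * t) := by
  obtain ⟨q, r, hrL, rfl⟩ : ∃ q r, r < L ∧ t = q * L + r :=
    ⟨t / L, t % L, Nat.mod_lt t hL, (Nat.div_add_mod' t L).symm⟩
  have hsplit : transitionProd f 0 (q * L + r) =
      transitionProd f (q * L) r * transitionProd (fun j ↦ transitionProd f (j * L) L) 0 q := by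
    rw [transitionProd_add, transitionProd_mul]
    simp only [zero_add]
  have hrem : ‖transitionProd f (q * L) r‖ ≤ max 1 M ^ L :=
    (norm_transitionProd_le h1 hf _ r).trans <| (pow_le_pow_left₀ hM (le_max_right 1 M) r).trans <|
      pow_le_pow_right₀ (le_max_left 1 M) hrL.le
  have hwins : ‖transitionProd (fun j ↦ transitionProd f (j * L) L) 0 q‖ ≤
      Real.exp (-γ * L) ^ q :=
    norm_transitionProd_le h1 (fun j ↦ hwin _) 0 q
  have hdecay :
      Real.exp (-γ * L) ^ q ≤ Real.exp (γ * L) * Real.exp (-γ * (q * L + r : ℕ)) := by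
    rw [← Real.exp_nat_mul, ← Real.exp_add, Real.exp_le_exp]
    have hr : (r : ℝ) ≤ L := by exact_mod_cast hrL.le
    push_cast
    linarith [mul_le_mul_of_nonneg_left hr hγ]
  rw [hsplit, mul_assoc]
  exact norm_mul_le_of_le hrem (hwins.trans hdecay)

end NormedRing

theorem ges_of_frequent_stable_subsystem_general {d N m : ℕ}
    (hNm : 2 ≤ N * m)
    (A : Fin N → Matrix (Fin d) (Fin d) ℝ) (p : Fin N)
    (M ρ ε γ : ℝ) (hM : 0 ≤ M) (hε : 0 ≤ ε) (hγ : 0 < γ)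
    (hA : ∀ i, opNorm (A i) ≤ M)
    (hApm : opNorm (A p ^ m) ≤ ρ)
    (hcomm : ∀ i, i ≠ p → opNorm (A p * A i - A i * A p) ≤ ε)
    (hkey : ρ * M ^ ((N - 1) * m) +
        ((N : ℝ) - 1) * ((m : ℝ) * ((m : ℝ) + 1) / 2) * M ^ (N * m - 2) * ε ≤
        Real.exp (-γ * (N * m : ℕ)))
    (σ : ℕ → Fin N)
    (hσ : ∀ s : ℕ, ∃ t, s ≤ t ∧ t < s + N ∧ σ t = p) :
    ∃ c : ℝ, 0 < c ∧
      (∀ t : ℕ, 1 ≤ t →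
          opNorm (transitionMatrix A σ t) ≤ c * Real.exp (-γ * t)) ∧
      (∀ x₀ : EuclideanSpace ℝ (Fin d), ∀ t : ℕ, 1 ≤ t →
          ‖Matrix.toEuclideanCLM (𝕜 := ℝ) (transitionMatrix A σ t) x₀‖ ≤
            c * Real.exp (-γ * t) * ‖x₀‖) := by
  obtain ⟨n, rfl⟩ : ∃ n, N = n + 1 := Nat.exists_eq_add_one.mpr p.pos
  set T := Matrix.toEuclideanCLM (n := Fin d) (𝕜 := ℝ)
  set f : ℕ → EuclideanSpace ℝ (Fin d) →L[ℝ] EuclideanSpace ℝ (Fin d) := fun i ↦ T (A (σ i))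
  have h1 : ‖(1 : EuclideanSpace ℝ (Fin d) →L[ℝ] EuclideanSpace ℝ (Fin d))‖ ≤ 1 :=
    ContinuousLinearMap.norm_id_le
  have hf (i : ℕ) : NearlyCommutesWith (T (A p)) M ε 1 (f i) := by
    refine .of_norm_le (hA _) ?_
    by_cases hi : σ i = p
    · simpa [f, hi] using hε
    · simpa [f, opNorm] using hcomm (σ i) hi
  have hfreq (s : ℕ) : ∃ t, s ≤ t ∧ t < s + (n + 1) ∧ f t = T (A p) := by
    obtain ⟨t, hst, hts, hσt⟩ := hσ s
    exact ⟨t, hst, hts, by simp [f, hσt]⟩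
  have hwin (s : ℕ) : ‖transitionProd f s ((n + 1) * m)‖ ≤ Real.exp (-γ * ((n + 1) * m : ℕ)) := by
    refine (norm_transitionProd_le_of_frequent h1 hM hε hf hfreq s m).trans (le_trans ?_ hkey)
    have hPm : ‖T (A p) ^ m‖ ≤ ρ := by rw [← map_pow]; exact hApm
    push_cast
    simp only [add_sub_cancel_right]
    gcongr
  have hbound := norm_transitionProd_le_mul_exp h1 (by omega) hM hγ.le (fun i ↦ hA _) hwin
  have hT (t : ℕ) : T (transitionMatrix A σ t) = transitionProd f 0 t := by
    rw [transitionMatrix_eq_transitionProd, map_transitionProd]; rfl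
  refine ⟨max 1 M ^ ((n + 1) * m) * Real.exp (γ * ((n + 1) * m : ℕ)), by positivity,
    fun t _ ↦ ?_, fun x₀ t _ ↦ ?_⟩
  · rw [opNorm, hT]; exact hbound t
  · rw [hT]
    exact (ContinuousLinearMap.le_opNorm _ _).trans
      (mul_le_mul_of_nonneg_right (hbound t) (norm_nonneg _))

theorem ges_of_frequent_stable_subsystem {d N m : ℕ} (hN : 1 ≤ N) (hm : 1 ≤ m)
    (hNm : 2 ≤ N * m)
    (A : Fin N → Matrix (Fin d) (Fin d) ℝ) (p : Fin N)
    (M ρ ε γ : ℝ) (hM : 0 ≤ M) (hρ : 0 ≤ ρ) (hε : 0 ≤ ε) (hγ : 0 < γ)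
    (hA : ∀ i, opNorm (A i) ≤ M)
    (hApm : opNorm (A p ^ m) ≤ ρ)
    (hcomm : ∀ i, i ≠ p → opNorm (A p * A i - A i * A p) ≤ ε)
    (hkey : ρ * M ^ ((N - 1) * m) +
        ((N : ℝ) - 1) * ((m : ℝ) * ((m : ℝ) + 1) / 2) * M ^ (N * m - 2) * ε ≤
        Real.exp (-γ * (N * m : ℕ)))
    (σ : ℕ → Fin N)
    (hσ : ∀ s : ℕ, ∃ t, s ≤ t ∧ t < s + N ∧ σ t = p) :
    ∃ c : ℝ, 0 < c ∧
      (∀ t : ℕ, 1 ≤ t →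
          opNorm (transitionMatrix A σ t) ≤ c * Real.exp (-γ * t)) ∧
      (∀ x₀ : EuclideanSpace ℝ (Fin d), ∀ t : ℕ, 1 ≤ t →
          ‖Matrix.toEuclideanCLM (𝕜 := ℝ) (transitionMatrix A σ t) x₀‖ ≤
            c * Real.exp (-γ * t) * ‖x₀‖) :=
  ges_of_frequent_stable_subsystem_general hNm A p M ρ ε γ hM hε hγ hA hApm hcomm hkey σ hσ
end

section
/- Let P = {1, …, N} with N ≥ 1, let A_i (i ∈ P) be d×d real matrices, and let m ≥ 1 with N·m ≥ 2. Let M ≥ 0, ρ ≥ 0, ε ≥ 0 and suppose there is p ∈ P such that: ‖A_i‖ ≤ M for all i ∈ P; ‖A_p^m‖ ≤ ρ; ‖A_p A_i − A_i A_p‖ ≤ ε for all i ∈ P with i ≠ p; and there exists γ > 0 with ρ · M^{(N−1)m} + (N−1) · (m(m+1)/2) · M^{Nm−2} · ε ≤ e^{−γNm}. Let σ : ℕ → P be a switching signal whose corresponding infinite walk is a concatenation of cycles through p starting at p: there is a strictly increasing sequence t_0 < t_1 < t_2 < ⋯ in ℕ with t_0 = 0 such that for every j, σ(t_j) = p and σ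 is injective on the block {t_j, t_j + 1, …, t_{j+1} − 1} (so in particular t_{j+1} − t_j ≤ N, since P has N elements). Then there exists c > 0 such that ‖A_{σ(t−1)} ⋯ A_{σ(1)} A_{σ(0)}‖ ≤ c e^{−γt} for all t ≥ 1, i.e., the switched system is globally exponentially stable under σ. -/
/-!
Group the cycles `m` at a time. In the product over a group the factor `A p` occurs `m` times;
pushing every copy of it to the right, past the other factors of the group, rewrites the product
as `Y * A p ^ m + E`, where `Y` is a product of at most `(N - 1) m` factors and each of the at most
`(N - 1) m (m - 1) / 2` swaps contributes to `E` a term with one commutator (norm `≤ ε`) and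
`T - 2` further factors (norm `≤ M`), `T` being the length of the group. The hypothesis on
`ρ, M, ε, γ` then bounds the product over a group of length `T ≤ N m` by `e^{-γ T}`, and the
incomplete group at the end of a time interval only costs a constant factor.
-/

section Monoid

variable {R : Type*} [Monoid R]

def blockProd (f : ℕ → R) (a : ℕ) : ℕ → R
  | 0 => 1
  | n + 1 => f (a + n) * blockProd f a n

@[simp]
lemma blockProd_zero (f : ℕ → R) (a : ℕ) : blockProd f a 0 = 1 := rfl

lemma blockProd_succ (f : ℕ → R) (a n : ℕ) :
    blockProd f a (n + 1) = f (a + n) * blockProd f a n := rfl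

lemma blockProd_add (f : ℕ → R) (a k n : ℕ) :
    blockProd f a (k + n) = blockProd f (a + k) n * blockProd f a k := by
  induction n with
  | zero => simp
  | succ n ih => rw [← add_assoc, blockProd_succ, ih, blockProd_succ, add_assoc, mul_assoc]

lemma blockProd_succ' (f : ℕ → R) (a n : ℕ) :
    blockProd f a (n + 1) = blockProd f (a + 1) n * f a := by
  rw [add_comm, blockProd_add, blockProd_succ, blockProd_zero, add_zero, mul_one]

lemma map_blockProd {S F : Type*} [Monoid S] [FunLike F R S] [MonoidHomClass F R S] (φ : F)
    (f : ℕ → R) (a n : ℕ) : φ (blockProd f a n) = blockProd (fun i => φ (f i)) a n := by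
  induction n with
  | zero => simp
  | succ n ih => rw [blockProd_succ, blockProd_succ, map_mul, ih]

end Monoid

lemma transitionMatrix_eq_blockProd {d : ℕ} {P : Type*} (A : P → Matrix (Fin d) (Fin d) ℝ)
    (σ : ℕ → P) (s : ℕ) : transitionMatrix A σ s = blockProd (fun i => A (σ i)) 0 s := by
  induction s with
  | zero => rfl
  | succ s ih => simp [transitionMatrix, List.range_succ, ← ih, blockProd_succ]

lemma exists_le_lt_succ_of_strictMono {τ : ℕ → ℕ} (hτ : StrictMono τ) (hτ0 : τ 0 = 0) (s : ℕ) :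
    ∃ g, τ g ≤ s ∧ s < τ (g + 1) := by
  induction s with
  | zero => exact ⟨0, hτ0.le, hτ0.symm.trans_lt (hτ (Nat.lt_add_one 0))⟩
  | succ s ih =>
    obtain ⟨g, hgs, hsg⟩ := ih
    rcases (Nat.succ_le_of_lt hsg).lt_or_eq with hlt | heq
    · exact ⟨g, by omega, hlt⟩
    · exact ⟨g + 1, heq.ge, heq.trans_lt (hτ (Nat.lt_add_one _))⟩

section SeminormedRing

variable {R : Type*} [SeminormedRing R]

/-- `x` behaves like a product of `n` factors of norm at most `M`, each commuting with `a` up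
to an error of norm at most `ε`. The commutator bound `n ε M ^ (n - 1)` is multiplied by `M`
to avoid truncated subtraction. -/
def AlmostCommutes (a : R) (M ε : ℝ) (n : ℕ) (x : R) : Prop :=
  ‖x‖ ≤ M ^ n ∧ ‖a * x - x * a‖ * M ≤ n * ε * M ^ n

lemma AlmostCommutes.of_norm_le {a b : R} {M ε : ℝ} (hb : ‖b‖ ≤ M)
    (hab : ‖a * b - b * a‖ ≤ ε) : AlmostCommutes a M ε 1 b :=
  ⟨by simpa using hb, by simpa using mul_le_mul_of_nonneg_right hab ((norm_nonneg b).trans hb)⟩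

lemma AlmostCommutes.mul {a x y : R} {M ε : ℝ} {k n : ℕ} (hM : 0 ≤ M)
    (hx : AlmostCommutes a M ε k x) (hy : AlmostCommutes a M ε n y) :
    AlmostCommutes a M ε (k + n) (x * y) := by
  obtain ⟨hx, hax⟩ := hx
  obtain ⟨hy, hay⟩ := hy
  have hMk : 0 ≤ M ^ k := (norm_nonneg x).trans hx
  refine ⟨?_, ?_⟩
  · rw [pow_add]
    exact (norm_mul_le x y).trans (mul_le_mul hx hy (norm_nonneg y) hMk)
  · have hcomm : a * (x * y) - x * y * a = (a * x - x * a) * y + x * (a * y - y * a) := by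
      noncomm_ring
    have hkε : 0 ≤ k * ε * M ^ k := (mul_nonneg (norm_nonneg _) hM).trans hax
    calc ‖a * (x * y) - x * y * a‖ * M
        ≤ (‖a * x - x * a‖ * ‖y‖ + ‖x‖ * ‖a * y - y * a‖) * M := by
          rw [hcomm]
          gcongr
          exact (norm_add_le _ _).trans (add_le_add (norm_mul_le _ _) (norm_mul_le _ _))
      _ = ‖a * x - x * a‖ * M * ‖y‖ + ‖x‖ * (‖a * y - y * a‖ * M) := by ring
      _ ≤ k * ε * M ^ k * M ^ n + M ^ k * (n * ε * M ^ n) :=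
          add_le_add (mul_le_mul hax hy (norm_nonneg _) hkε) (mul_le_mul hx hay (by positivity) hMk)
      _ = (k + n : ℕ) * ε * M ^ (k + n) := by push_cast; ring

structure IsCycleSchedule (f : ℕ → R) (a : R) (ε : ℝ) (N : ℕ) (t : ℕ → ℕ) : Prop where
  strictMono : StrictMono t
  apply_eq : ∀ j, f (t j) = a
  sub_le : ∀ j, t (j + 1) - t j ≤ N
  norm_commutator_le : ∀ j i, t j < i → i < t (j + 1) → ‖a * f i - f i * a‖ ≤ ε

namespace IsCycleSchedule

variable {f : ℕ → R} {a : R} {ε : ℝ} {N : ℕ} {t : ℕ → ℕ}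

lemma shift (h : IsCycleSchedule f a ε N t) (k : ℕ) :
    IsCycleSchedule f a ε N (fun j => t (k + j)) where
  strictMono := h.strictMono.comp (strictMono_id.const_add k)
  apply_eq j := h.apply_eq (k + j)
  sub_le j := h.sub_le (k + j)
  norm_commutator_le j := h.norm_commutator_le (k + j)

lemma sub_le_mul (h : IsCycleSchedule f a ε N t) (i : ℕ) : t i - t 0 ≤ N * i := by
  induction i with
  | zero => simp
  | succ i ih =>
    have := h.sub_le i
    have := h.strictMono.monotone (Nat.zero_le i)
    rw [Nat.mul_succ]
    omega

lemma blockProd_cycle (h : IsCycleSchedule f a ε N t) (j : ℕ) :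
    blockProd f (t j) (t (j + 1) - t j) = blockProd f (t j + 1) (t (j + 1) - t j - 1) * a := by
  have hlen : t (j + 1) - t j = t (j + 1) - t j - 1 + 1 := by
    have := h.strictMono (Nat.lt_add_one j)
    omega
  rw [hlen, blockProd_succ', h.apply_eq, Nat.add_sub_cancel]

end IsCycleSchedule

theorem isCycleSchedule_of_injOn {P : Type*} [Fintype P] {g : P → R} {σ : ℕ → P} {p : P}
    {ε : ℝ} {t : ℕ → ℕ} (ht : StrictMono t) (hσt : ∀ j, σ (t j) = p)
    (hinj : ∀ j, Set.InjOn σ (Set.Ico (t j) (t (j + 1))))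
    (hcomm : ∀ i, i ≠ p → ‖g p * g i - g i * g p‖ ≤ ε) :
    IsCycleSchedule (fun i => g (σ i)) (g p) ε (Fintype.card P) t where
  strictMono := ht
  apply_eq j := by rw [hσt]
  sub_le j := by
    simpa using Finset.card_le_card_of_injOn σ (s := Finset.Ico (t j) (t (j + 1)))
      (t := Finset.univ) (fun _ _ => Finset.mem_coe.2 (Finset.mem_univ _)) (by simpa using hinj j)
  norm_commutator_le j i hji hij := hcomm _ fun hp =>
    hji.ne' (hinj j ⟨hji.le, hij⟩ ⟨le_rfl, ht (Nat.lt_add_one j)⟩ (hp.trans (hσt j).symm))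

end SeminormedRing

lemma le_pow_of_mul_pow_le {x K M : ℝ} {T e : ℕ} (hx : 0 ≤ x) (hK : 0 < K) (hKM : K ≤ M)
    (h : x * M ^ e ≤ K ^ (T + e)) : x ≤ K ^ T := by
  refine le_of_mul_le_mul_right ?_ (pow_pos hK e)
  calc x * K ^ e ≤ x * M ^ e := mul_le_mul_of_nonneg_left (pow_le_pow_left₀ hK.le hKM e) hx
    _ ≤ K ^ T * K ^ e := h.trans_eq (pow_add K T e)

section Operator

variable {𝕜 E : Type*} [NontriviallyNormedField 𝕜] [SeminormedAddCommGroup E] [NormedSpace 𝕜 E]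
  {f : ℕ → E →L[𝕜] E} {a : E →L[𝕜] E} {M ε : ℝ}

namespace ContinuousLinearMap

lemma norm_one_le : ‖(1 : E →L[𝕜] E)‖ ≤ 1 := norm_id_le

lemma norm_pow_le_of_norm_le (ha : ‖a‖ ≤ M) : ∀ i, ‖a ^ i‖ ≤ M ^ i
  | 0 => by simpa using norm_one_le
  | i + 1 => (norm_pow_le' a i.succ_pos).trans (pow_le_pow_left₀ (norm_nonneg a) ha _)

end ContinuousLinearMap

open ContinuousLinearMap

lemma norm_blockProd_le (hf : ∀ i, ‖f i‖ ≤ M) (b n : ℕ) : ‖blockProd f b n‖ ≤ M ^ n := by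
  induction n with
  | zero => simpa using norm_one_le
  | succ n ih =>
    rw [blockProd_succ, pow_succ']
    exact (norm_mul_le _ _).trans
      (mul_le_mul (hf _) ih (norm_nonneg _) ((norm_nonneg _).trans (hf 0)))

lemma almostCommutes_blockProd (hf : ∀ i, ‖f i‖ ≤ M) {b n : ℕ}
    (hcomm : ∀ i, b ≤ i → i < b + n → ‖a * f i - f i * a‖ ≤ ε) :
    AlmostCommutes a M ε n (blockProd f b n) := by
  induction n with
  | zero => exact ⟨by simpa using norm_one_le, by simp⟩
  | succ n ih =>
    rw [blockProd_succ, add_comm n]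
    exact (AlmostCommutes.of_norm_le (hf _) (hcomm _ (by omega) (by omega))).mul
      ((norm_nonneg _).trans (hf 0)) (ih fun i hbi hin => hcomm i hbi (by omega))

/-- The error term in `L * a * (Y * a ^ i + E) = L * Y * a ^ (i + 1) + (error)`. -/
lemma norm_push_error_le {L Y E : E →L[𝕜] E} {B : ℝ} {ℓ n i : ℕ} (hM : 0 ≤ M) (ha : ‖a‖ ≤ M)
    (hL : ‖L‖ ≤ M ^ ℓ) (hY : AlmostCommutes a M ε n Y) (hE : ‖E‖ * M ^ 2 ≤ B) :
    ‖L * (a * Y - Y * a) * a ^ i + L * (a * E)‖ * M ^ 2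
      ≤ M ^ (ℓ + 1) * (n * ε * M ^ (n + i) + B) := by
  have h₁ : ‖L * (a * Y - Y * a) * a ^ i‖ ≤ ‖L‖ * ‖a * Y - Y * a‖ * ‖a ^ i‖ :=
    (norm_mul_le _ _).trans (mul_le_mul_of_nonneg_right (norm_mul_le _ _) (norm_nonneg _))
  have h₂ : ‖L * (a * E)‖ ≤ ‖L‖ * (‖a‖ * ‖E‖) :=
    (norm_mul_le _ _).trans (mul_le_mul_of_nonneg_left (norm_mul_le _ _) (norm_nonneg _))
  calc _ ≤ (‖L‖ * ‖a * Y - Y * a‖ * ‖a ^ i‖ + ‖L‖ * (‖a‖ * ‖E‖)) * M ^ 2 := by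
        gcongr; exact (norm_add_le _ _).trans (add_le_add h₁ h₂)
    _ = ‖L‖ * (‖a * Y - Y * a‖ * M) * ‖a ^ i‖ * M + ‖L‖ * ‖a‖ * (‖E‖ * M ^ 2) := by ring
    _ ≤ M ^ ℓ * (n * ε * M ^ n) * M ^ i * M + M ^ ℓ * M * B := by
        have hnε : 0 ≤ n * ε * M ^ n := (mul_nonneg (norm_nonneg _) hM).trans hY.2
        gcongr ?_ * ?_ * ?_ * _ + ?_ * ?_ * ?_
        · exact hY.2
        · exact norm_pow_le_of_norm_le ha i
    _ = M ^ (ℓ + 1) * (n * ε * M ^ (n + i) + B) := by ring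

lemma norm_blockProd_le_pow_of_blocks {K : ℝ} {τ : ℕ → ℕ} (hK : 0 ≤ K) (hτ : Monotone τ)
    (hτ0 : τ 0 = 0)
    (hblock : ∀ g, ‖blockProd f (τ g) (τ (g + 1) - τ g)‖ ≤ K ^ (τ (g + 1) - τ g)) (g : ℕ) :
    ‖blockProd f 0 (τ g)‖ ≤ K ^ τ g := by
  induction g with
  | zero => simpa [hτ0] using norm_one_le
  | succ g ih =>
    rw [← Nat.add_sub_cancel' (hτ g.le_succ), blockProd_add, zero_add, pow_add,
      mul_comm (K ^ τ g)]
    exact (norm_mul_le _ _).trans (mul_le_mul (hblock g) ih (norm_nonneg _) (by positivity))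

theorem exists_norm_blockProd_le_mul_pow {K : ℝ} {D : ℕ} {τ : ℕ → ℕ} (hf : ∀ i, ‖f i‖ ≤ M)
    (hK : 0 < K) (hτ : StrictMono τ) (hτ0 : τ 0 = 0) (hgap : ∀ g, τ (g + 1) - τ g ≤ D)
    (hdecay : ∀ g, ‖blockProd f 0 (τ g)‖ ≤ K ^ τ g) :
    ∃ c, 0 < c ∧ ∀ s, ‖blockProd f 0 s‖ ≤ c * K ^ s := by
  set C := max M K / K
  have hC : 1 ≤ C := (one_le_div hK).2 (le_max_right M K)
  have hCK : ∀ i, ‖f i‖ ≤ C * K := fun i =>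
    (hf i).trans ((le_max_left M K).trans_eq (div_mul_cancel₀ _ hK.ne').symm)
  refine ⟨C ^ D, by positivity, fun s => ?_⟩
  obtain ⟨g, hgs, hsg⟩ := exists_le_lt_succ_of_strictMono hτ hτ0 s
  obtain ⟨r, rfl⟩ := Nat.exists_eq_add_of_le hgs
  have hr : r ≤ D := (hgap g).trans' (by omega)
  calc ‖blockProd f 0 (τ g + r)‖ ≤ ‖blockProd f (τ g) r‖ * ‖blockProd f 0 (τ g)‖ := by
        rw [blockProd_add, zero_add]; exact norm_mul_le _ _
    _ ≤ (C * K) ^ r * K ^ τ g :=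
        mul_le_mul (norm_blockProd_le hCK _ _) (hdecay g) (norm_nonneg _)
          (pow_nonneg (mul_nonneg (zero_le_one.trans hC) hK.le) r)
    _ = C ^ r * K ^ (τ g + r) := by ring
    _ ≤ C ^ D * K ^ (τ g + r) := by gcongr

namespace IsCycleSchedule

variable {N : ℕ} {t : ℕ → ℕ}

theorem exists_blockProd_eq_mul_pow_add (h : IsCycleSchedule f a ε N t) (hf : ∀ i, ‖f i‖ ≤ M)
    (hε : 0 ≤ ε) (i : ℕ) :
    ∃ n Y E, blockProd f (t 0) (t i - t 0) = Y * a ^ i + E ∧ AlmostCommutes a M ε n Y ∧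
      n + i = t i - t 0 ∧
      ‖E‖ * M ^ 2 ≤ ε * ((N - 1) * (i * (i - 1) / 2)) * M ^ (t i - t 0) := by
  have hM : 0 ≤ M := (norm_nonneg _).trans (hf 0)
  have ha : ‖a‖ ≤ M := h.apply_eq 0 ▸ hf (t 0)
  induction i with
  | zero => exact ⟨0, 1, 0, by simp, ⟨by simpa using norm_one_le, by simp⟩, by simp, by simp⟩
  | succ i ih =>
    obtain ⟨n, Y, E, hX, hY, hn, hE⟩ := ih
    set ℓ := t (i + 1) - t i - 1
    have hti : t 0 ≤ t i := h.strictMono.monotone (Nat.zero_le i)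
    have hcyc : t i < t (i + 1) := h.strictMono (Nat.lt_add_one i)
    have hL : AlmostCommutes a M ε ℓ (blockProd f (t i + 1) ℓ) :=
      almostCommutes_blockProd hf fun u h₁ h₂ => h.norm_commutator_le i u (by omega) (by omega)
    refine ⟨ℓ + n, blockProd f (t i + 1) ℓ * Y,
      blockProd f (t i + 1) ℓ * (a * Y - Y * a) * a ^ i + blockProd f (t i + 1) ℓ * (a * E),
      ?_, hL.mul hM hY, by omega, ?_⟩
    · rw [show t (i + 1) - t 0 = (t i - t 0) + (t (i + 1) - t i) by omega, blockProd_add,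
        Nat.add_sub_cancel' hti, h.blockProd_cycle, hX]
      generalize blockProd f (t i + 1) ℓ = L
      rw [pow_succ']
      noncomm_ring
    · have hnN : (n : ℝ) ≤ (N - 1) * i := by
        have : n + i ≤ N * i := hn ▸ h.sub_le_mul i
        have : (n : ℝ) + i ≤ N * i := by exact_mod_cast this
        linarith
      calc _ ≤ M ^ (ℓ + 1) * (n * ε * M ^ (n + i)
              + ε * ((N - 1) * (i * (i - 1) / 2)) * M ^ (t i - t 0)) :=
            norm_push_error_le hM ha hL.1 hY hE
        _ = ε * (n + (N - 1) * (i * (i - 1) / 2)) * M ^ (t (i + 1) - t 0) := by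
            rw [show t (i + 1) - t 0 = (ℓ + 1) + (n + i) by omega, ← hn]; ring
        _ ≤ ε * ((N - 1) * ((i + 1 : ℕ) * ((i + 1 : ℕ) - 1) / 2)) * M ^ (t (i + 1) - t 0) := by
            gcongr; push_cast; linarith

theorem norm_blockProd_le_pow {ρ K : ℝ} {m : ℕ} (h : IsCycleSchedule f a ε N t)
    (hf : ∀ i, ‖f i‖ ≤ M) (hε : 0 ≤ ε) (hNm : 2 ≤ N * m) (hρ : ‖a ^ m‖ ≤ ρ) (hK : 0 < K)
    (hkey : ρ * M ^ ((N - 1) * m) +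
        ((N : ℝ) - 1) * ((m : ℝ) * ((m : ℝ) + 1) / 2) * M ^ (N * m - 2) * ε ≤ K ^ (N * m)) :
    ‖blockProd f (t 0) (t m - t 0)‖ ≤ K ^ (t m - t 0) := by
  have hT : t m - t 0 ≤ N * m := h.sub_le_mul m
  rcases le_or_gt M K with hMK | hKM
  · exact (norm_blockProd_le hf _ _).trans
      (pow_le_pow_left₀ ((norm_nonneg _).trans (hf 0)) hMK _)
  have hM : 0 < M := hK.trans hKM
  obtain ⟨n, Y, E, hX, hY, hn, hE⟩ := h.exists_blockProd_eq_mul_pow_add hf hε m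
  set T := t m - t 0
  have hN : (1 : ℝ) ≤ N := by
    exact_mod_cast Nat.one_le_iff_ne_zero.2 (by rintro rfl; simp at hNm)
  have hcoef : ((N : ℝ) - 1) * (m * (m - 1) / 2) ≤ (N - 1) * (m * (m + 1) / 2) := by
    nlinarith [mul_nonneg (sub_nonneg.2 hN) (Nat.cast_nonneg (α := ℝ) m)]
  have hEe : ‖E‖ * M ^ (N * m - T) ≤
      ((N : ℝ) - 1) * ((m : ℝ) * ((m : ℝ) + 1) / 2) * M ^ (N * m - 2) * ε := by
    refine le_of_mul_le_mul_right ?_ (pow_pos hM T)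
    calc ‖E‖ * M ^ (N * m - T) * M ^ T = ‖E‖ * M ^ 2 * M ^ (N * m - 2) := by
          rw [mul_assoc, mul_assoc, ← pow_add, ← pow_add]; congr 2; omega
      _ ≤ ε * ((N - 1) * (m * (m - 1) / 2)) * M ^ T * M ^ (N * m - 2) := by gcongr
      _ ≤ ε * ((N - 1) * (m * (m + 1) / 2)) * M ^ T * M ^ (N * m - 2) := by gcongr
      _ = _ := by ring
  refine le_pow_of_mul_pow_le (norm_nonneg _) hK hKM.le (e := N * m - T) ?_
  calc ‖blockProd f (t 0) T‖ * M ^ (N * m - T) ≤ (M ^ n * ρ + ‖E‖) * M ^ (N * m - T) := by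
        rw [hX]
        gcongr
        exact (norm_add_le _ _).trans (add_le_add ((norm_mul_le _ _).trans
          (mul_le_mul hY.1 hρ (norm_nonneg _) (by positivity))) le_rfl)
    _ = ρ * M ^ ((N - 1) * m) + ‖E‖ * M ^ (N * m - T) := by
        rw [Nat.sub_one_mul, show N * m - m = n + (N * m - T) by omega, pow_add]; ring
    _ ≤ K ^ (N * m) := (add_le_add le_rfl hEe).trans hkey
    _ = K ^ (T + (N * m - T)) := by rw [Nat.add_sub_cancel' hT]

end IsCycleSchedule

end Operator

theorem ges_of_concatenated_p_cycles_general {d N m : ℕ} (hm : 1 ≤ m)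
    (hNm : 2 ≤ N * m)
    (A : Fin N → Matrix (Fin d) (Fin d) ℝ) (p : Fin N)
    (M ρ ε γ : ℝ) (hε : 0 ≤ ε)
    (hA : ∀ i, opNorm (A i) ≤ M)
    (hApm : opNorm (A p ^ m) ≤ ρ)
    (hcomm : ∀ i, i ≠ p → opNorm (A p * A i - A i * A p) ≤ ε)
    (hkey : ρ * M ^ ((N - 1) * m) +
        ((N : ℝ) - 1) * ((m : ℝ) * ((m : ℝ) + 1) / 2) * M ^ (N * m - 2) * ε ≤
        Real.exp (-γ * (N * m : ℕ)))
    (σ : ℕ → Fin N) (t : ℕ → ℕ) (ht_mono : StrictMono t) (ht0 : t 0 = 0)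
    (ht_p : ∀ j : ℕ, σ (t j) = p)
    (ht_inj : ∀ j : ℕ, Set.InjOn σ (Set.Ico (t j) (t (j + 1)))) :
    ∃ c : ℝ, 0 < c ∧ ∀ s : ℕ, 1 ≤ s →
      opNorm (transitionMatrix A σ s) ≤ c * Real.exp (-γ * s) := by
  let B : Fin N → _ := fun i => Matrix.toEuclideanCLM (𝕜 := ℝ) (A i)
  have hB : ∀ i, ‖B i‖ ≤ M := hA
  have hpow : ‖B p ^ m‖ ≤ ρ := by simpa [B, opNorm] using hApm
  have hcyc : IsCycleSchedule (fun i => B (σ i)) (B p) ε N t := by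
    simpa using isCycleSchedule_of_injOn ht_mono ht_p ht_inj fun i hi => by
      simpa [B, opNorm] using hcomm i hi
  rw [mul_comm (-γ), Real.exp_nat_mul] at hkey
  have hτ : StrictMono fun g => t (g * m) := ht_mono.comp (strictMono_mul_right_of_pos hm)
  have hgap (g : ℕ) : t ((g + 1) * m) - t (g * m) ≤ N * m := by
    simpa [add_mul] using (hcyc.shift (g * m)).sub_le_mul m
  have hblock (g : ℕ) := (hcyc.shift (g * m)).norm_blockProd_le_pow (fun i => hB (σ i)) hε hNm
    hpow (Real.exp_pos (-γ)) hkey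
  have hdecay := norm_blockProd_le_pow_of_blocks (Real.exp_pos (-γ)).le hτ.monotone
    (by simp [ht0]) fun g => by simpa [add_mul] using hblock g
  obtain ⟨c, hc, hbound⟩ := exists_norm_blockProd_le_mul_pow (fun i => hB (σ i))
    (Real.exp_pos (-γ)) hτ (by simp [ht0]) hgap hdecay
  refine ⟨c, hc, fun s _ => ?_⟩
  rw [opNorm, transitionMatrix_eq_blockProd, map_blockProd, mul_comm (-γ), Real.exp_nat_mul]
  exact hbound s

theorem ges_of_concatenated_p_cycles {d N m : ℕ} (hN : 1 ≤ N) (hm : 1 ≤ m)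
    (hNm : 2 ≤ N * m)
    (A : Fin N → Matrix (Fin d) (Fin d) ℝ) (p : Fin N)
    (M ρ ε γ : ℝ) (hM : 0 ≤ M) (hρ : 0 ≤ ρ) (hε : 0 ≤ ε) (hγ : 0 < γ)
    (hA : ∀ i, opNorm (A i) ≤ M)
    (hApm : opNorm (A p ^ m) ≤ ρ)
    (hcomm : ∀ i, i ≠ p → opNorm (A p * A i - A i * A p) ≤ ε)
    (hkey : ρ * M ^ ((N - 1) * m) +
        ((N : ℝ) - 1) * ((m : ℝ) * ((m : ℝ) + 1) / 2) * M ^ (N * m - 2) * ε ≤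
        Real.exp (-γ * (N * m : ℕ)))
    (σ : ℕ → Fin N) (t : ℕ → ℕ) (ht_mono : StrictMono t) (ht0 : t 0 = 0)
    (ht_p : ∀ j : ℕ, σ (t j) = p)
    (ht_inj : ∀ j : ℕ, Set.InjOn σ (Set.Ico (t j) (t (j + 1)))) :
    ∃ c : ℝ, 0 < c ∧ ∀ s : ℕ, 1 ≤ s →
      opNorm (transitionMatrix A σ s) ≤ c * Real.exp (-γ * s) :=
  ges_of_concatenated_p_cycles_general hm hNm A p M ρ ε γ hε hA hApm hcomm hkey σ t ht_mono ht0 ht_p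
    ht_inj
end

section
/- Let P be a finite set, let A_i (i ∈ P) be d×d real matrices, and let v_0 = p, v_1, …, v_{n−1} ∈ P (n ≥ 1) be pairwise distinct. Let m ≥ 1 with n·m ≥ 2, and let M ≥ 0, ρ ≥ 0, ε ≥ 0 satisfy: ‖A_{v_i}‖ ≤ M for all i ∈ {0, …, n−1}; ‖A_p^m‖ ≤ ρ; ‖A_p A_{v_i} − A_{v_i} A_p‖ ≤ ε for all i ∈ {1, …, n−1}; and ρ · M^{(n−1)m} + (n−1) · (m(m+1)/2) · M^{nm−2} · ε < 1. Define the periodic switching signal σ : ℕ → P by σ(t) = v_{t mod n}. Then there exist c > 0 and γ > 0 such that ‖A_{σ(t−1)} ⋯ A_{σ(1)} A_{σ(0)}‖ ≤ c e^{−γt} for all t ≥ 1, i.e., the switched system is globally exponentially stable under the periodic switching signal obtained by repeating the cycle p, v_1, …, v_{n−1}. -/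
theorem natCast_mul_pow_sub_one_mul {S : Type*} [Semiring S] (k : ℕ) (x : S) :
    (k : S) * x ^ (k - 1) * x = k * x ^ k := by
  rcases k with _ | k
  · simp
  · rw [Nat.add_sub_cancel, mul_assoc, ← pow_succ]

section SeminormedRing

-- `h₁` rather than `NormOneClass R`, which fails for `0 × 0` matrices (`‖1‖ = 0`).
variable {R : Type*} [SeminormedRing R]

theorem norm_list_prod_le_pow (h₁ : ‖(1 : R)‖ ≤ 1) {l : List R} {M : ℝ}
    (hl : ∀ x ∈ l, ‖x‖ ≤ M) : ‖l.prod‖ ≤ M ^ l.length := by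
  induction l with
  | nil => simpa using h₁
  | cons x l ih =>
    rw [List.prod_cons, List.length_cons, pow_succ']
    have hx := hl x List.mem_cons_self
    exact (norm_mul_le _ _).trans <| mul_le_mul hx (ih fun y hy => hl y (List.mem_cons_of_mem x hy))
      (norm_nonneg _) ((norm_nonneg x).trans hx)

theorem norm_pow_le_pow_of_le (h₁ : ‖(1 : R)‖ ≤ 1) {a : R} {α : ℝ} (ha : ‖a‖ ≤ α) (k : ℕ) :
    ‖a ^ k‖ ≤ α ^ k := by
  simpa using norm_list_prod_le_pow h₁ (l := List.replicate k a) (by simpa using fun _ => ha)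

theorem norm_commutator_list_prod_le (h₁ : ‖(1 : R)‖ ≤ 1) {b : R} {l : List R} {M ε : ℝ}
    (hl : ∀ x ∈ l, ‖x‖ ≤ M ∧ ‖b * x - x * b‖ ≤ ε) :
    ‖b * l.prod - l.prod * b‖ ≤ l.length * M ^ (l.length - 1) * ε := by
  induction l with
  | nil => simp
  | cons x l ih =>
    obtain ⟨hxM, hxε⟩ := hl x List.mem_cons_self
    have hl' : ∀ y ∈ l, ‖y‖ ≤ M ∧ ‖b * y - y * b‖ ≤ ε :=
      fun y hy => hl y (List.mem_cons_of_mem x hy)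
    have hM : 0 ≤ M := (norm_nonneg x).trans hxM
    have hε : 0 ≤ ε := (norm_nonneg _).trans hxε
    have leibniz : b * (x * l.prod) - x * l.prod * b
        = (b * x - x * b) * l.prod + x * (b * l.prod - l.prod * b) := by noncomm_ring
    calc ‖b * (x :: l).prod - (x :: l).prod * b‖
        ≤ ‖b * x - x * b‖ * ‖l.prod‖ + ‖x‖ * ‖b * l.prod - l.prod * b‖ := by
          rw [List.prod_cons, leibniz]
          exact (norm_add_le _ _).trans (add_le_add (norm_mul_le _ _) (norm_mul_le _ _))
      _ ≤ ε * M ^ l.length + M * (l.length * M ^ (l.length - 1) * ε) := by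
          gcongr
          exacts [norm_list_prod_le_pow h₁ fun y hy => (hl' y hy).1, ih hl']
      _ = (x :: l).length * M ^ ((x :: l).length - 1) * ε := by
          rw [List.length_cons, Nat.add_sub_cancel, Nat.cast_succ]
          linear_combination ε * natCast_mul_pow_sub_one_mul l.length M

theorem norm_commutator_pow_le (h₁ : ‖(1 : R)‖ ≤ 1) {a b : R} {α δ : ℝ} (ha : ‖a‖ ≤ α)
    (hab : ‖b * a - a * b‖ ≤ δ) (k : ℕ) :
    ‖b * a ^ k - a ^ k * b‖ ≤ k * α ^ (k - 1) * δ := by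
  simpa using norm_commutator_list_prod_le h₁ (b := b) (l := List.replicate k a)
    (by simpa using fun _ => ⟨ha, hab⟩)

theorem norm_mul_pow_sub_pow_mul_pow_le (h₁ : ‖(1 : R)‖ ≤ 1) {a c : R} {α β δ : ℝ}
    (ha : ‖a‖ ≤ α) (hc : ‖c‖ ≤ β) (hac : ‖a * c - c * a‖ ≤ δ) (k : ℕ) :
    ‖(c * a) ^ k - c ^ k * a ^ k‖ ≤ k * (k - 1) / 2 * (β * α) ^ (k - 1) * δ := by
  induction k with
  | zero => simp
  | succ k ih =>
    have hα : 0 ≤ α := (norm_nonneg a).trans ha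
    have hβ : 0 ≤ β := (norm_nonneg c).trans hc
    have hδ : 0 ≤ δ := (norm_nonneg _).trans hac
    have hcomm : ‖a ^ k * c - c * a ^ k‖ ≤ k * α ^ (k - 1) * δ := by
      rw [norm_sub_rev]
      exact norm_commutator_pow_le h₁ ha (by rwa [norm_sub_rev]) k
    have split : (c * a) ^ (k + 1) - c ^ (k + 1) * a ^ (k + 1)
        = ((c * a) ^ k - c ^ k * a ^ k) * (c * a) + c ^ k * (a ^ k * c - c * a ^ k) * a := by
      rw [pow_succ, pow_succ c, pow_succ a]; noncomm_ring
    calc ‖(c * a) ^ (k + 1) - c ^ (k + 1) * a ^ (k + 1)‖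
        ≤ ‖(c * a) ^ k - c ^ k * a ^ k‖ * (‖c‖ * ‖a‖)
          + ‖c ^ k‖ * ‖a ^ k * c - c * a ^ k‖ * ‖a‖ := by
          rw [split]
          refine (norm_add_le _ _).trans (add_le_add ?_ ?_)
          · exact (norm_mul_le _ _).trans (by gcongr; exact norm_mul_le _ _)
          · exact (norm_mul_le _ _).trans (by gcongr; exact norm_mul_le _ _)
      _ ≤ k * (k - 1) / 2 * (β * α) ^ (k - 1) * δ * (β * α)
          + β ^ k * (k * α ^ (k - 1) * δ) * α := by
          gcongr
          exacts [(norm_nonneg _).trans ih, norm_pow_le_pow_of_le h₁ hc k]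
      _ = (k + 1 : ℕ) * ((k + 1 : ℕ) - 1) / 2 * (β * α) ^ (k + 1 - 1) * δ := by
          rw [Nat.add_sub_cancel]
          push_cast
          linear_combination (k - 1) / 2 * δ * natCast_mul_pow_sub_one_mul k (β * α)
            + β ^ k * δ * natCast_mul_pow_sub_one_mul k α

theorem norm_list_prod_mul_pow_le (h₁ : ‖(1 : R)‖ ≤ 1) {a : R} {l : List R} {m : ℕ}
    {M ρ ε : ℝ} (ha : ‖a‖ ≤ M) (ham : ‖a ^ m‖ ≤ ρ)
    (hl : ∀ x ∈ l, ‖x‖ ≤ M ∧ ‖a * x - x * a‖ ≤ ε) :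
    ‖(l.prod * a) ^ m‖ ≤
      ρ * M ^ (l.length * m) + l.length * (m * (m - 1) / 2) * M ^ ((l.length + 1) * m - 2) * ε := by
  set L := l.length
  have hM : 0 ≤ M := (norm_nonneg a).trans ha
  have hC : ‖l.prod‖ ≤ M ^ L := norm_list_prod_le_pow h₁ fun x hx => (hl x hx).1
  have hdiff := norm_mul_pow_sub_pow_mul_pow_le h₁ ha hC (norm_commutator_list_prod_le h₁ hl) m
  have hexp : (m * (m - 1) / 2 : ℝ) * (M ^ L * M) ^ (m - 1) * (L * M ^ (L - 1) * ε)
      = L * (m * (m - 1) / 2) * M ^ ((L + 1) * m - 2) * ε := by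
    rcases Nat.eq_zero_or_pos L with hL | hL
    · simp [hL]
    rcases Nat.eq_zero_or_pos m with hm | hm
    · simp [hm]
    have hpow : (M ^ L * M) ^ (m - 1) * M ^ (L - 1) = M ^ ((L + 1) * m - 2) := by
      rw [← pow_succ, ← pow_mul, ← pow_add, Nat.mul_sub_one]
      have := Nat.le_mul_of_pos_right (L + 1) hm
      congr 1
      omega
    rw [← hpow]
    ring
  calc ‖(l.prod * a) ^ m‖
      ≤ ‖l.prod ^ m‖ * ‖a ^ m‖ + ‖(l.prod * a) ^ m - l.prod ^ m * a ^ m‖ :=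
        (norm_le_norm_add_norm_sub' _ _).trans (by gcongr; exact norm_mul_le _ _)
    _ ≤ M ^ (L * m) * ρ + L * (m * (m - 1) / 2) * M ^ ((L + 1) * m - 2) * ε := by
        rw [← hexp, pow_mul]
        gcongr
        exact norm_pow_le_pow_of_le h₁ hC m
    _ = _ := by ring

end SeminormedRing

theorem exists_pow_div_le_exp {r : ℝ} (hr₀ : 0 ≤ r) (hr₁ : r < 1) {N : ℕ} (hN : 0 < N) :
    ∃ c, 0 < c ∧ ∃ γ, 0 < γ ∧ ∀ t : ℕ, r ^ (t / N) ≤ c * Real.exp (-γ * t) := by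
  obtain ⟨s, hrs, hs₁⟩ := exists_between hr₁
  have hs₀ : 0 < s := hr₀.trans_lt hrs
  have hlog : Real.log s < 0 := Real.log_neg hs₀ hs₁
  have hN' : (0 : ℝ) < N := by exact_mod_cast hN
  refine ⟨s⁻¹, inv_pos.2 hs₀, -Real.log s / N, div_pos (neg_pos.2 hlog) hN', fun t => ?_⟩
  have hq : (t : ℝ) / N ≤ (t / N + 1 : ℕ) := by
    have := Nat.lt_div_mul_add (a := t) hN
    rw [div_le_iff₀ hN']
    exact_mod_cast (by linarith : t ≤ (t / N + 1) * N)
  calc r ^ (t / N) ≤ s ^ (t / N) := pow_le_pow_left₀ hr₀ hrs.le _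
    _ = s⁻¹ * Real.exp ((t / N + 1 : ℕ) * Real.log s) := by
        rw [Real.exp_nat_mul, Real.exp_log hs₀, pow_succ]
        field_simp
    _ ≤ s⁻¹ * Real.exp (-(-Real.log s / N) * t) := by
        refine mul_le_mul_of_nonneg_left (Real.exp_le_exp.2 ?_) (inv_nonneg.2 hs₀.le)
        calc ((t / N + 1 : ℕ) : ℝ) * Real.log s ≤ (t / N) * Real.log s :=
              mul_le_mul_of_nonpos_right hq hlog.le
          _ = -(-Real.log s / N) * t := by ring

-- Under this instance `opNorm X` is definitionally `‖X‖`.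
open scoped Matrix.Norms.L2Operator

theorem Matrix.l2_opNorm_one_le {𝕜 n : Type*} [RCLike 𝕜] [Fintype n] [DecidableEq n] :
    ‖(1 : Matrix n n 𝕜)‖ ≤ 1 := by
  rw [Matrix.cstar_norm_def, map_one, ContinuousLinearMap.one_def]
  exact ContinuousLinearMap.norm_id_le

section transitionMatrix

variable {d : ℕ} {P : Type*} (A : P → Matrix (Fin d) (Fin d) ℝ)

theorem transitionMatrix_zero (σ : ℕ → P) : transitionMatrix A σ 0 = 1 := by
  simp [transitionMatrix]

theorem transitionMatrix_succ (σ : ℕ → P) (t : ℕ) :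
    transitionMatrix A σ (t + 1) = A (σ t) * transitionMatrix A σ t := by
  simp [transitionMatrix, List.range_succ]

theorem transitionMatrix_one (σ : ℕ → P) : transitionMatrix A σ 1 = A (σ 0) := by
  rw [transitionMatrix_succ, transitionMatrix_zero, mul_one]

theorem transitionMatrix_add (σ : ℕ → P) (s t : ℕ) :
    transitionMatrix A σ (s + t) =
      transitionMatrix A (fun i => σ (s + i)) t * transitionMatrix A σ s := by
  induction t with
  | zero => rw [transitionMatrix_zero, one_mul, add_zero]
  | succ t ih => rw [← add_assoc, transitionMatrix_succ, transitionMatrix_succ, ih, mul_assoc]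

variable {σ : ℕ → P} {N : ℕ}

theorem transitionMatrix_mul_add_of_periodic (hσ : Function.Periodic σ N) (q t : ℕ) :
    transitionMatrix A σ (N * q + t) = transitionMatrix A σ t * transitionMatrix A σ (N * q) := by
  rw [transitionMatrix_add]
  congr
  funext i
  rw [add_comm, mul_comm]
  exact hσ.nat_mul q i

theorem transitionMatrix_mul_of_periodic (hσ : Function.Periodic σ N) (q : ℕ) :
    transitionMatrix A σ (N * q) = transitionMatrix A σ N ^ q := by
  induction q with
  | zero => rw [mul_zero, transitionMatrix_zero, pow_zero]
  | succ q ih => rw [Nat.mul_succ, transitionMatrix_mul_add_of_periodic A hσ, ih, pow_succ']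

theorem norm_transitionMatrix_pow_le {m : ℕ} {M ρ ε : ℝ} (hN : 1 ≤ N)
    (h₀ : ‖A (σ 0)‖ ≤ M) (h₀m : ‖A (σ 0) ^ m‖ ≤ ρ)
    (hstep : ∀ i, 0 < i → i < N →
      ‖A (σ i)‖ ≤ M ∧ ‖A (σ 0) * A (σ i) - A (σ i) * A (σ 0)‖ ≤ ε) :
    ‖transitionMatrix A σ N ^ m‖ ≤
      ρ * M ^ ((N - 1) * m) + ((N : ℝ) - 1) * (m * (m - 1) / 2) * M ^ (N * m - 2) * ε := by
  set cycle := (List.range (N - 1)).reverse.map fun i => A (σ (1 + i))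
  have hperiod : transitionMatrix A σ N = cycle.prod * A (σ 0) := by
    rw [← Nat.add_sub_cancel' hN, transitionMatrix_add, transitionMatrix_one]
    rfl
  have hcycle : ∀ x ∈ cycle, ‖x‖ ≤ M ∧ ‖A (σ 0) * x - x * A (σ 0)‖ ≤ ε := by
    intro x hx
    simp only [cycle, List.mem_map, List.mem_reverse, List.mem_range] at hx
    obtain ⟨i, hi, rfl⟩ := hx
    exact hstep (1 + i) (by omega) (by omega)
  have hlen : cycle.length = N - 1 := by simp [cycle]
  simpa only [hperiod, hlen, Nat.sub_add_cancel hN, Nat.cast_pred hN]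
    using norm_list_prod_mul_pow_le Matrix.l2_opNorm_one_le h₀ h₀m hcycle

theorem exists_norm_transitionMatrix_le_exp_of_periodic (hN : 0 < N) (hσ : Function.Periodic σ N)
    (hΦ : ‖transitionMatrix A σ N‖ < 1) :
    ∃ c, 0 < c ∧ ∃ γ, 0 < γ ∧ ∀ t : ℕ, ‖transitionMatrix A σ t‖ ≤ c * Real.exp (-γ * t) := by
  obtain ⟨c, hc, γ, hγ, hdecay⟩ := exists_pow_div_le_exp (norm_nonneg _) hΦ hN
  set K := ∑ s ∈ Finset.range N, ‖transitionMatrix A σ s‖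
  have hK : 0 ≤ K := Finset.sum_nonneg fun _ _ => norm_nonneg _
  refine ⟨(K + 1) * c, by positivity, γ, hγ, fun t => ?_⟩
  have hrem : ‖transitionMatrix A σ (t % N)‖ ≤ K + 1 :=
    (Finset.single_le_sum (fun _ _ => norm_nonneg _) (Finset.mem_range.2 (Nat.mod_lt t hN))).trans
      (le_add_of_nonneg_right zero_le_one)
  calc ‖transitionMatrix A σ t‖
      = ‖transitionMatrix A σ (t % N) * transitionMatrix A σ N ^ (t / N)‖ := by
        rw [← transitionMatrix_mul_of_periodic A hσ, ← transitionMatrix_mul_add_of_periodic A hσ,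
          Nat.div_add_mod]
    _ ≤ (K + 1) * ‖transitionMatrix A σ N‖ ^ (t / N) :=
        (norm_mul_le _ _).trans (mul_le_mul hrem
          (norm_pow_le_pow_of_le Matrix.l2_opNorm_one_le le_rfl _) (norm_nonneg _) (by positivity))
    _ ≤ (K + 1) * c * Real.exp (-γ * t) := by
        rw [mul_assoc]
        exact mul_le_mul_of_nonneg_left (hdecay t) (by positivity)

end transitionMatrix

theorem ges_of_periodic_cycle_general {d n m : ℕ} {P : Type*}
    (hn : 1 ≤ n) (hm : 1 ≤ m)
    (A : P → Matrix (Fin d) (Fin d) ℝ)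
    (v : Fin n → P) (p : P) (hp : v ⟨0, hn⟩ = p)
    (M ρ ε : ℝ) (hM : 0 ≤ M) (hε : 0 ≤ ε)
    (hA : ∀ i : Fin n, opNorm (A (v i)) ≤ M)
    (hApm : opNorm (A p ^ m) ≤ ρ)
    (hcomm : ∀ i : Fin n, i ≠ ⟨0, hn⟩ → opNorm (A p * A (v i) - A (v i) * A p) ≤ ε)
    (hkey : ρ * M ^ ((n - 1) * m) +
        ((n : ℝ) - 1) * ((m : ℝ) * ((m : ℝ) + 1) / 2) * M ^ (n * m - 2) * ε < 1) :
    ∃ c : ℝ, 0 < c ∧ ∃ γ : ℝ, 0 < γ ∧ ∀ t : ℕ, 1 ≤ t →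
      opNorm (transitionMatrix A (fun s => v ⟨s % n, Nat.mod_lt s hn⟩) t) ≤
        c * Real.exp (-γ * t) := by
  set σ : ℕ → P := fun s => v ⟨s % n, Nat.mod_lt s hn⟩
  have hσ : Function.Periodic σ n := fun s => congrArg v (Fin.ext (Nat.add_mod_right s n))
  have hσ_lt {i : ℕ} (hi : i < n) : σ i = v ⟨i, hi⟩ := congrArg v (Fin.ext (Nat.mod_eq_of_lt hi))
  have hσ₀ : σ 0 = p := (hσ_lt (by omega)).trans hp
  have hstep (i : ℕ) (hi₀ : 0 < i) (hi : i < n) :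
      ‖A (σ i)‖ ≤ M ∧ ‖A (σ 0) * A (σ i) - A (σ i) * A (σ 0)‖ ≤ ε := by
    rw [hσ_lt hi, hσ₀]
    exact ⟨hA _, hcomm _ (Fin.ne_of_val_ne hi₀.ne')⟩
  have hcontract : ‖transitionMatrix A σ (n * m)‖ < 1 :=
    calc ‖transitionMatrix A σ (n * m)‖ = ‖transitionMatrix A σ n ^ m‖ := by
          rw [transitionMatrix_mul_of_periodic A hσ]
      _ ≤ ρ * M ^ ((n - 1) * m) + ((n : ℝ) - 1) * (m * (m - 1) / 2) * M ^ (n * m - 2) * ε :=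
          norm_transitionMatrix_pow_le A hn (hσ₀ ▸ hp ▸ hA ⟨0, hn⟩) (hσ₀ ▸ hApm) hstep
      _ ≤ ρ * M ^ ((n - 1) * m) + ((n : ℝ) - 1) * (m * (m + 1) / 2) * M ^ (n * m - 2) * ε := by
          gcongr
          · exact sub_nonneg.2 (Nat.one_le_cast.2 hn)
          · linarith
      _ < 1 := hkey
  obtain ⟨c, hc, γ, hγ, hdecay⟩ := exists_norm_transitionMatrix_le_exp_of_periodic A
    (Nat.mul_pos hn hm) (by simpa [mul_comm] using hσ.nat_mul m) hcontract
  exact ⟨c, hc, γ, hγ, fun t _ => hdecay t⟩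

theorem ges_of_periodic_cycle {d n m : ℕ} {P : Type*} [Fintype P]
    (hn : 1 ≤ n) (hm : 1 ≤ m) (hnm : 2 ≤ n * m)
    (A : P → Matrix (Fin d) (Fin d) ℝ)
    (v : Fin n → P) (hv : Function.Injective v) (p : P) (hp : v ⟨0, hn⟩ = p)
    (M ρ ε : ℝ) (hM : 0 ≤ M) (hρ : 0 ≤ ρ) (hε : 0 ≤ ε)
    (hA : ∀ i : Fin n, opNorm (A (v i)) ≤ M)
    (hApm : opNorm (A p ^ m) ≤ ρ)
    (hcomm : ∀ i : Fin n, i ≠ ⟨0, hn⟩ → opNorm (A p * A (v i) - A (v i) * A p) ≤ ε)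
    (hkey : ρ * M ^ ((n - 1) * m) +
        ((n : ℝ) - 1) * ((m : ℝ) * ((m : ℝ) + 1) / 2) * M ^ (n * m - 2) * ε < 1) :
    ∃ c : ℝ, 0 < c ∧ ∃ γ : ℝ, 0 < γ ∧ ∀ t : ℕ, 1 ≤ t →
      opNorm (transitionMatrix A (fun s => v ⟨s % n, Nat.mod_lt s hn⟩) t) ≤
        c * Real.exp (-γ * t) :=
  ges_of_periodic_cycle_general hn hm A v p hp M ρ ε hM hε hA hApm hcomm hkey
end
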